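/- arXiv:2204.11980 — 8 statements merged into one kernel-verified Lean document; each statement's English description precedes it below -/
import Mathlib

section
/- In the two-player normalised total effort game, a profile (x_1, x_2) of non-negative contributions is a Nash equilibrium if and only if x_1 = x_2 = x for some x with 0 ≤ x ≤ (1/2)·min(β_1, β_2), where β_i = v_i/c_i. -/
/-- Utility of player `i` in the normalised total effort game:
`u_i = v_i · log((∑ x_j)/(max_j x_j)) − c_i · x_i` when the maximum contribution is
positive, and `0` when all contributions are zero. -/
noncomputable def util {n : ℕ} (v c : Fin n → ℝ) (i : Fin n) (x : Fin n → ℝ) : ℝ :=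
  if 0 < ⨆ j, x j then v i * Real.log ((∑ j, x j) / (⨆ j, x j)) - c i * x i else 0

/-- A profile is a Nash equilibrium if no player can strictly increase their own utility
by unilaterally changing their contribution (to any non-negative value). -/
def IsNash {n : ℕ} (v c : Fin n → ℝ) (x : Fin n → ℝ) : Prop :=
  ∀ i : Fin n, ∀ y : ℝ, 0 ≤ y →
    util v c i (Function.update x i y) ≤ util v c i x

/-- Two-argument utility: own contribution `a`, other's contribution `b`. -/
noncomputable def NTEG_U (v c a b : ℝ) : ℝ :=
  if 0 < max a b then v * Real.log ((a + b) / max a b) - c * a else 0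

lemma sup_fin2 (x : Fin 2 → ℝ) : (⨆ j, x j) = max (x 0) (x 1) := by
  apply le_antisymm
  · exact ciSup_le fun j => by fin_cases j <;> simp
  · exact max_le (le_ciSup (Set.finite_range x).bddAbove 0)
      (le_ciSup (Set.finite_range x).bddAbove 1)

lemma util0 (v c x : Fin 2 → ℝ) : util v c 0 x = NTEG_U (v 0) (c 0) (x 0) (x 1) := by
  simp only [util, NTEG_U, sup_fin2, Fin.sum_univ_two]

lemma util1 (v c x : Fin 2 → ℝ) : util v c 1 x = NTEG_U (v 1) (c 1) (x 1) (x 0) := by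
  simp only [util, NTEG_U, sup_fin2, Fin.sum_univ_two, max_comm (x 0) (x 1),
    add_comm (x 0) (x 1)]

lemma util_upd0 (v c x : Fin 2 → ℝ) (y : ℝ) :
    util v c 0 (Function.update x 0 y) = NTEG_U (v 0) (c 0) y (x 1) := by
  rw [util0]; simp

lemma util_upd1 (v c x : Fin 2 → ℝ) (y : ℝ) :
    util v c 1 (Function.update x 1 y) = NTEG_U (v 1) (c 1) y (x 0) := by
  rw [util1]; simp

/-- At an equal profile `x ≤ v/(2c)` no deviation helps. -/
lemma NTEG_U_le (v c x y : ℝ) (hv : 0 < v) (hc : 0 < c) (hx : 0 ≤ x)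
    (hxb : x ≤ v / (2 * c)) (hy : 0 ≤ y) : NTEG_U v c y x ≤ NTEG_U v c x x := by
  rcases eq_or_lt_of_le hx with h0 | hxpos
  · -- x = 0
    subst h0
    rcases eq_or_lt_of_le hy with h0' | hypos
    · subst h0'; simp
    · have h1 : NTEG_U v c 0 0 = 0 := by unfold NTEG_U; simp
      have h2 : NTEG_U v c y 0 = v * Real.log (y / y) - c * y := by
        unfold NTEG_U; rw [max_eq_left hy, if_pos hypos, add_zero]
      rw [h1, h2, div_self (ne_of_gt hypos), Real.log_one]
      nlinarith
  · -- x > 0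
    have hxx : NTEG_U v c x x = v * Real.log 2 - c * x := by
      unfold NTEG_U
      rw [if_pos (by simp [hxpos]), max_self, show (x + x) / x = 2 by field_simp; ring]
    rw [hxx]
    rcases le_total y x with hyx | hxy
    · -- downward deviation: max y x = x
      have hmax : max y x = x := max_eq_right hyx
      unfold NTEG_U
      rw [if_pos (by rw [hmax]; exact hxpos), hmax]
      -- key log bound: log ((y+x)/x) ≤ log 2 + (y - x)/(2*x)
      have ht : (0:ℝ) < (y + x) / (2 * x) := by positivity
      have hsplit : (y + x) / x = ((y + x) / (2 * x)) * 2 := by field_simp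
      have hlog : Real.log ((y + x) / x) ≤ Real.log 2 + (y - x) / (2 * x) := by
        rw [hsplit, Real.log_mul (ne_of_gt ht) two_ne_zero]
        have := Real.log_le_sub_one_of_pos ht
        have h2 : (y + x) / (2 * x) - 1 = (y - x) / (2 * x) := by field_simp; ring
        linarith [h2 ▸ this]
      have hv' : v * Real.log ((y + x) / x) ≤ v * Real.log 2 + v * ((y - x) / (2 * x)) := by
        nlinarith
      have hcb : x * (2 * c) ≤ v := (le_div_iff₀ (by positivity : (0:ℝ) < 2 * c)).mp hxb
      have hkey : v * ((y - x) / (2 * x)) ≤ c * y - c * x := by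
        rw [show v * ((y - x) / (2 * x)) = v * (y - x) / (2 * x) from by ring,
          div_le_iff₀ (by positivity : (0:ℝ) < 2 * x)]
        nlinarith [mul_nonneg (sub_nonneg.2 hyx) (sub_nonneg.2 hcb)]
      linarith
    · -- upward deviation: max y x = y
      have hypos : 0 < y := lt_of_lt_of_le hxpos hxy
      have hmax : max y x = y := max_eq_left hxy
      unfold NTEG_U
      rw [if_pos (by rw [hmax]; exact hypos), hmax]
      have hle2 : (y + x) / y ≤ 2 := by rw [div_le_iff₀ hypos]; linarith
      have hpos : (0:ℝ) < (y + x) / y := by positivity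
      have hlog : Real.log ((y + x) / y) ≤ Real.log 2 :=
        Real.log_le_log (by positivity) hle2
      nlinarith

/-- Unequal profile: the bigger contributor profits by dropping to the smaller. -/
lemma NTEG_U_dev_eq (v c a b : ℝ) (hv : 0 < v) (hc : 0 < c) (hb : 0 ≤ b) (hba : b < a) :
    NTEG_U v c a b < NTEG_U v c b b := by
  have ha : 0 < a := lt_of_le_of_lt hb hba
  have hval : NTEG_U v c a b = v * Real.log ((a + b) / a) - c * a := by
    unfold NTEG_U; rw [if_pos (lt_max_iff.2 (Or.inl ha)), max_eq_left hba.le]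
  rcases eq_or_lt_of_le hb with h0 | hbpos
  · subst h0
    rw [hval]
    unfold NTEG_U
    rw [if_neg (by simp)]
    simp only [add_zero, div_self (ne_of_gt ha), Real.log_one]
    nlinarith
  · have hvb : NTEG_U v c b b = v * Real.log 2 - c * b := by
      unfold NTEG_U
      rw [if_pos (by simp [hbpos]), max_self, show (b + b) / b = 2 by field_simp; ring]
    rw [hval, hvb]
    have hle2 : (a + b) / a ≤ 2 := by rw [div_le_iff₀ ha]; linarith
    have hlog : Real.log ((a + b) / a) ≤ Real.log 2 :=
      Real.log_le_log (by positivity) hle2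
    nlinarith

/-- Equal profile above `v/(2c)`: deviating down to `v/(2c)` strictly helps. -/
lemma NTEG_U_dev_big (v c x : ℝ) (hv : 0 < v) (hc : 0 < c) (hx : v / (2 * c) < x) :
    NTEG_U v c x x < NTEG_U v c (v / (2 * c)) x := by
  set y := v / (2 * c) with hy
  have hypos : 0 < y := by positivity
  have hxpos : 0 < x := lt_trans hypos hx
  have hxx : NTEG_U v c x x = v * Real.log 2 - c * x := by
    unfold NTEG_U
    rw [if_pos (by simp [hxpos]), max_self, show (x + x) / x = 2 by field_simp; ring]
  have hyx : NTEG_U v c y x = v * Real.log ((y + x) / x) - c * y := by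
    unfold NTEG_U
    rw [if_pos (lt_max_iff.2 (Or.inr hxpos)), max_eq_right hx.le]
  rw [hxx, hyx]
  -- log 2 ≤ log ((y+x)/x) + (x - y)/(x + y)
  have hsum : (0:ℝ) < x + y := by positivity
  have ht : (0:ℝ) < 2 * x / (x + y) := by positivity
  have hsplit : (2:ℝ) = ((y + x) / x) * (2 * x / (x + y)) := by field_simp; ring
  have hlog : Real.log 2 ≤ Real.log ((y + x) / x) + (x - y) / (x + y) := by
    rw [hsplit, Real.log_mul (by positivity) (ne_of_gt ht)]
    have := Real.log_le_sub_one_of_pos ht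
    have h2 : 2 * x / (x + y) - 1 = (x - y) / (x + y) := by field_simp; ring
    linarith [h2 ▸ this]
  have hv' : v * Real.log 2 ≤ v * Real.log ((y + x) / x) + v * ((x - y) / (x + y)) := by
    nlinarith
  have hxy : y < x := hx
  have hcy : c * y = v / 2 := by rw [hy]; field_simp
  have hkey : v * ((x - y) / (x + y)) < c * x - c * y := by
    rw [show v * ((x - y) / (x + y)) = v * (x - y) / (x + y) from by ring,
      div_lt_iff₀ hsum]
    nlinarith [mul_pos hc (mul_pos (sub_pos.2 hxy) (sub_pos.2 hxy))]
  linarith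

/-- In the two-player normalised total effort game, a profile `(x 0, x 1)` of
non-negative contributions is a Nash equilibrium iff `x 0 = x 1 = xeq` for some
`xeq` with `0 ≤ xeq ≤ (1/2)·min(β₁, β₂)`, where `βᵢ = vᵢ/cᵢ`. -/
theorem two_player_nash_iff (v c : Fin 2 → ℝ) (hv : ∀ i, 0 < v i) (hc : ∀ i, 0 < c i)
    (x : Fin 2 → ℝ) (hx : ∀ i, 0 ≤ x i) :
    IsNash v c x ↔
      ∃ xeq : ℝ, x 0 = xeq ∧ x 1 = xeq ∧ 0 ≤ xeq ∧
        xeq ≤ (1 / 2) * min (v 0 / c 0) (v 1 / c 1) := by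
  constructor
  · intro hN
    have h01 : x 0 = x 1 := by
      rcases lt_trichotomy (x 0) (x 1) with h | h | h
      · have hdev := hN 1 (x 0) (hx 0)
        rw [util_upd1, util1] at hdev
        exact absurd hdev (not_le.2 (NTEG_U_dev_eq (v 1) (c 1) (x 1) (x 0)
          (hv 1) (hc 1) (hx 0) h))
      · exact h
      · have hdev := hN 0 (x 1) (hx 1)
        rw [util_upd0, util0] at hdev
        exact absurd hdev (not_le.2 (NTEG_U_dev_eq (v 0) (c 0) (x 0) (x 1)
          (hv 0) (hc 0) (hx 1) h))
    refine ⟨x 0, rfl, h01.symm, hx 0, ?_⟩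
    by_contra hgt
    push_neg at hgt
    have hmin : min (v 0 / c 0) (v 1 / c 1) < 2 * x 0 := by linarith
    rcases min_lt_iff.1 hmin with h | h
    · have hb : v 0 / (2 * c 0) < x 0 := by
        rw [div_lt_iff₀ (by linarith [hc 0] : (0:ℝ) < 2 * c 0)]
        rw [div_lt_iff₀ (hc 0)] at h
        linarith
      have hdev := hN 0 (v 0 / (2 * c 0)) (le_of_lt (div_pos (hv 0) (by linarith [hc 0])))
      rw [util_upd0, util0] at hdev
      have := NTEG_U_dev_big (v 0) (c 0) (x 0) (hv 0) (hc 0) hb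
      rw [← h01] at hdev
      linarith
    · have hb : v 1 / (2 * c 1) < x 1 := by
        rw [div_lt_iff₀ (by linarith [hc 1] : (0:ℝ) < 2 * c 1)]
        rw [div_lt_iff₀ (hc 1)] at h
        rw [h01] at *
        linarith
      have hdev := hN 1 (v 1 / (2 * c 1)) (le_of_lt (div_pos (hv 1) (by linarith [hc 1])))
      rw [util_upd1, util1] at hdev
      have := NTEG_U_dev_big (v 1) (c 1) (x 1) (hv 1) (hc 1) hb
      rw [h01] at hdev
      linarith
  · rintro ⟨xeq, h0, h1, hpos, hbound⟩
    have half0 : (1/2 : ℝ) * (v 0 / c 0) = v 0 / (2 * c 0) := by ring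
    have half1 : (1/2 : ℝ) * (v 1 / c 1) = v 1 / (2 * c 1) := by ring
    have hb0 : xeq ≤ v 0 / (2 * c 0) := by
      have h := min_le_left (v 0 / c 0) (v 1 / c 1)
      nlinarith
    have hb1 : xeq ≤ v 1 / (2 * c 1) := by
      have h := min_le_right (v 0 / c 0) (v 1 / c 1)
      nlinarith
    intro i y hy
    fin_cases i
    · rw [show (⟨0, by omega⟩ : Fin 2) = 0 from rfl, util_upd0, util0, h0, h1]
      exact NTEG_U_le _ _ _ _ (hv 0) (hc 0) hpos hb0 hy
    · rw [show (⟨1, by omega⟩ : Fin 2) = 1 from rfl, util_upd1, util1, h0, h1]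
      exact NTEG_U_le _ _ _ _ (hv 1) (hc 1) hpos hb1 hy
end

section
/- In the n-player normalised total effort game, fix the contributions x_i ≥ 0 of all players i ≠ j, let S = Σ_{i≠j} x_i and M = max_{i≠j} x_i. Then x* = max{0, min(M, β_j − S)} is a best response for player j: for every y ≥ 0, player j's utility when contributing y (with the others fixed) is at most player j's utility when contributing x*. -/
private lemma loglem (p q : ℝ) (hp : 0 < p) (hq : 0 < q) :
    Real.log p - Real.log q ≤ (p - q) / q := by
  rw [← Real.log_div hp.ne' hq.ne']
  have h1 := Real.log_le_sub_one_of_pos (div_pos hp hq)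
  have h2 : p / q - 1 = (p - q) / q := by field_simp
  linarith

private lemma hlem (v c S M y : ℝ) (hv : 0 < v) (hc : 0 < c) (hM : 0 < M)
    (hMS : M ≤ S) (hy : 0 ≤ y) (hyM : y ≤ M) :
    v * Real.log (y + S) - c * y ≤
      v * Real.log (max 0 (min M (v / c - S)) + S) -
        c * max 0 (min M (v / c - S)) := by
  set t := max 0 (min M (v / c - S)) with htdef
  have ht0 : 0 ≤ t := le_max_left _ _
  have htS : 0 < t + S := by linarith
  have hyS : 0 < y + S := by linarith
  have key := loglem (y + S) (t + S) hyS htS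
  have hsign : (y - t) * (v - c * (t + S)) ≤ 0 := by
    rcases le_or_gt (v / c - S) 0 with h | h
    · have hmin : min M (v / c - S) ≤ 0 := (min_le_right _ _).trans h
      have htt : t = 0 := max_eq_left hmin
      have hvle : v ≤ c * S := by
        have h' : v / c ≤ S := by linarith
        nlinarith [(div_le_iff₀ hc).mp h']
      rw [htt]
      apply mul_nonpos_of_nonneg_of_nonpos
      · linarith
      · linarith
    · rcases le_or_gt M (v / c - S) with h2 | h2
      · have htt : t = M := by
          rw [htdef, min_eq_left h2, max_eq_right hM.le]
        have hvge : c * (M + S) ≤ v := by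
          rw [le_sub_iff_add_le, le_div_iff₀ hc] at h2
          nlinarith
        rw [htt]
        apply mul_nonpos_of_nonpos_of_nonneg
        · linarith
        · linarith
      · have htt : t = v / c - S := by
          rw [htdef, min_eq_right h2.le, max_eq_right h.le]
        have : v - c * (t + S) = 0 := by
          rw [htt]; field_simp; ring
        rw [this, mul_zero]
  have h2 : v * (Real.log (y + S) - Real.log (t + S)) ≤
      v * ((y + S - (t + S)) / (t + S)) :=
    mul_le_mul_of_nonneg_left key hv.le
  have h3 : v * ((y + S - (t + S)) / (t + S)) ≤ c * (y - t) := by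
    have he : y + S - (t + S) = y - t := by ring
    rw [he, mul_div_assoc', div_le_iff₀ htS]
    nlinarith
  nlinarith

/-- In the `n`-player normalised total effort game, with the contributions of all players
`i ≠ j` fixed, `x* = max(0, min(M, β_j − S))` is a best response for player `j`, where
`S = ∑_{i ≠ j} x_i`, `M = max_{i ≠ j} x_i` and `β_j = v_j / c_j`: any non-negative
contribution `y` of player `j` yields at most the utility obtained by contributing `x*`. -/
theorem best_response (n : ℕ) (hn : 2 ≤ n) (v c : Fin n → ℝ) (hv : ∀ i, 0 < v i)
    (hc : ∀ i, 0 < c i) (x : Fin n → ℝ) (hx : ∀ i, 0 ≤ x i) (j : Fin n) :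
    ∀ y : ℝ, 0 ≤ y →
      util v c j (Function.update x j y) ≤
        util v c j (Function.update x j
          (max 0 (min (⨆ i : {i : Fin n // i ≠ j}, x i.val)
            (v j / c j - ∑ i ∈ Finset.univ.erase j, x i)))) := by
  intro y hy
  classical
  set M := ⨆ i : {i : Fin n // i ≠ j}, x i.val with hMdef
  set S := ∑ i ∈ Finset.univ.erase j, x i with hSdef
  obtain ⟨k, hk⟩ := Fintype.exists_ne_of_one_lt_card (by rw [Fintype.card_fin]; omega) j
  haveI : Nonempty {i : Fin n // i ≠ j} := ⟨⟨k, hk⟩⟩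
  haveI : Nonempty (Fin n) := ⟨j⟩
  have hbdd : BddAbove (Set.range fun i : {i : Fin n // i ≠ j} => x i.val) :=
    (Set.finite_range _).bddAbove
  have hM0 : 0 ≤ M := (hx k).trans (le_ciSup hbdd ⟨k, hk⟩)
  have hxM : ∀ i : Fin n, i ≠ j → x i ≤ M := fun i hi => le_ciSup hbdd ⟨i, hi⟩
  have hMS : M ≤ S := by
    rw [hMdef, hSdef]
    refine ciSup_le fun i => ?_
    exact Finset.single_le_sum (f := x) (fun i _ => hx i)
      (by simp [Finset.mem_erase, i.2])
  have hS0 : 0 ≤ S := Finset.sum_nonneg fun i _ => hx i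
  have hsup : ∀ z : ℝ, 0 ≤ z → (⨆ i, Function.update x j z i) = max z M := by
    intro z hz
    have hbdd' : BddAbove (Set.range (Function.update x j z)) :=
      (Set.finite_range _).bddAbove
    apply le_antisymm
    · refine ciSup_le fun i => ?_
      rcases eq_or_ne i j with rfl | hij
      · simp [Function.update_self]
      · rw [Function.update_of_ne hij]
        exact le_max_of_le_right (hxM i hij)
    · refine max_le ?_ ?_
      · have := le_ciSup hbdd' j
        rwa [Function.update_self] at this
      · refine ciSup_le fun i => ?_
        have := le_ciSup hbdd' i.1
        rwa [Function.update_of_ne i.2] at this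
  have hsum : ∀ z : ℝ, (∑ i, Function.update x j z i) = z + S := by
    intro z
    rw [Finset.sum_update_of_mem (Finset.mem_univ j), hSdef, Finset.erase_eq]
  set t := max 0 (min M (v j / c j - S)) with htdef
  have ht0 : 0 ≤ t := le_max_left _ _
  rcases eq_or_lt_of_le hM0 with hMz | hMpos
  · -- M = 0
    have hSz : S = 0 := by
      rw [hSdef]
      refine Finset.sum_eq_zero fun i hi => le_antisymm ?_ (hx i)
      exact (hxM i (Finset.ne_of_mem_erase hi)).trans hMz.ge
    have htz : t = 0 := by
      have hmin : min M (v j / c j - S) ≤ 0 := (min_le_left _ _).trans hMz.ge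
      rw [htdef, max_eq_left hmin]
    have hR : util v c j (Function.update x j t) = 0 := by
      rw [util, if_neg]
      rw [hsup t ht0, htz, ← hMz]
      simp
    rw [htdef] at hR ⊢
    rw [hR]
    rcases eq_or_lt_of_le hy with hyz | hyp
    · rw [util, if_neg]
      rw [hsup y hy, ← hyz, ← hMz]
      simp
    · rw [util, hsup y hy, hsum y, Function.update_self, ← hMz,
        max_eq_left hy, if_pos hyp, hSz]
      rw [add_zero, div_self hyp.ne', Real.log_one, mul_zero]
      have := mul_nonneg (hc j).le hy
      linarith
  · -- 0 < M
    have htM : t ≤ M := max_le hMpos.le (min_le_left _ _)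
    have hRt : util v c j (Function.update x j t) =
        v j * Real.log ((t + S) / M) - c j * t := by
      rw [util, hsup t ht0, hsum t, Function.update_self, max_eq_right htM,
        if_pos hMpos]
    rw [htdef] at hRt
    rw [hRt, util, hsup y hy, hsum y, Function.update_self,
      if_pos (lt_of_lt_of_le hMpos (le_max_right y M))]
    rw [← htdef]
    have hSpos : 0 < S := lt_of_lt_of_le hMpos hMS
    have hyS : 0 < y + S := by linarith
    have htS : 0 < t + S := by linarith
    rcases le_or_gt y M with hyM | hyM
    · rw [max_eq_right hyM, Real.log_div hyS.ne' hMpos.ne',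
        Real.log_div htS.ne' hMpos.ne']
      have hle := hlem (v j) (c j) S M y (hv j) (hc j) hMpos hMS hy hyM
      rw [← htdef] at hle
      nlinarith
    · rw [max_eq_left hyM.le]
      have hyp : 0 < y := hMpos.trans hyM
      have hMSy : 0 < M + S := by linarith
      have step1 : v j * Real.log ((y + S) / y) - c j * y ≤
          v j * Real.log ((M + S) / M) - c j * M := by
        have hdle : (y + S) / y ≤ (M + S) / M := by
          rw [div_le_div_iff₀ hyp hMpos]
          nlinarith
        have hylog : Real.log ((y + S) / y) ≤ Real.log ((M + S) / M) :=
          Real.log_le_log (div_pos hyS hyp) hdle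
        have h1 := mul_le_mul_of_nonneg_left hylog (hv j).le
        have h2 := mul_le_mul_of_nonneg_left hyM.le (hc j).le
        linarith
      have step2 : v j * Real.log ((M + S) / M) - c j * M ≤
          v j * Real.log ((t + S) / M) - c j * t := by
        rw [Real.log_div hMSy.ne' hMpos.ne', Real.log_div htS.ne' hMpos.ne']
        have hle := hlem (v j) (c j) S M M (hv j) (hc j) hMpos hMS hMpos.le le_rfl
        rw [← htdef] at hle
        nlinarith
      linarith
end

section
/- In the n-player normalised total effort game with n > 2 and pairwise distinct benefit-cost ratios, in any Nash equilibrium with at least one positive contribution, the set of positive contribution values contains at most two elements; moreover, at most one player contributes a positive amount strictly less than max_j x_j. -/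
/-- In the `n`-player normalised total effort game with `n > 2` and pairwise distinct
benefit-cost ratios, in any Nash equilibrium with at least one positive contribution:
the set of positive contribution values has at most two elements, and at most one
player contributes a positive amount strictly less than `max_j x_j`. -/
theorem equilibrium_at_most_two_values (n : ℕ) (hn : 2 < n) (v c : Fin n → ℝ)
    (hv : ∀ i, 0 < v i) (hc : ∀ i, 0 < c i)
    (hβ : Function.Injective (fun i : Fin n => v i / c i))
    (x : Fin n → ℝ) (hx : ∀ i, 0 ≤ x i) (hNash : IsNash v c x)
    (hpos : ∃ i, 0 < x i) :
    ((Finset.univ.image x).filter (fun y => 0 < y)).card ≤ 2 ∧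
    ∀ i j : Fin n, (0 < x i ∧ x i < ⨆ k, x k) → (0 < x j ∧ x j < ⨆ k, x k) → i = j := by
  have hne : Nonempty (Fin n) := ⟨⟨0, by omega⟩⟩
  set M : ℝ := ⨆ k, x k with hMdef
  set S : ℝ := ∑ j, x j with hSdef
  obtain ⟨j0, hj0⟩ := Finite.exists_max x
  have hbdd : BddAbove (Set.range x) := (Set.finite_range x).bddAbove
  have hMle : ∀ j, x j ≤ M := fun j => le_ciSup hbdd j
  have hMeq : M = x j0 := le_antisymm (ciSup_le hj0) (hMle j0)
  have hMpos : 0 < M := by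
    obtain ⟨i, hi⟩ := hpos
    exact lt_of_lt_of_le hi (hMle i)
  have hSpos : 0 < S := by
    obtain ⟨i, hi⟩ := hpos
    exact Finset.sum_pos' (fun j _ => hx j) ⟨i, Finset.mem_univ i, hi⟩
  have hSsub : ∀ i : Fin n, x i ≤ S := by
    intro i
    exact Finset.single_le_sum (fun j _ => hx j) (Finset.mem_univ i)
  -- Key: any player with an intermediate positive contribution satisfies v i = c i * S
  have key : ∀ i : Fin n, 0 < x i → x i < M → v i = c i * S := by
    intro i hi hiM
    have hj0i : j0 ≠ i := by
      intro h; rw [h] at hMeq; exact absurd hMeq.symm (ne_of_lt hiM)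
    -- sup after update stays M, for y ≤ M
    have hsup : ∀ y : ℝ, y ≤ M → (⨆ j, Function.update x i y j) = M := by
      intro y hy
      apply le_antisymm
      · apply ciSup_le
        intro j
        rcases eq_or_ne j i with rfl | h
        · simpa using hy
        · rw [Function.update_of_ne h]; exact hMle j
      · have h1 : Function.update x i y j0 = M := by
          rw [Function.update_of_ne hj0i]; exact hMeq.symm
        calc M = Function.update x i y j0 := h1.symm
          _ ≤ ⨆ j, Function.update x i y j :=
              le_ciSup ((Set.finite_range _).bddAbove) j0
    have hsum : ∀ y : ℝ, (∑ j, Function.update x i y j) = S - x i + y := by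
      intro y
      rw [Finset.sum_update_of_mem (Finset.mem_univ i)]
      have h0 : S = x i + ∑ j ∈ Finset.univ \ {i}, x j := by
        rw [Finset.sdiff_singleton_eq_erase, hSdef,
          ← Finset.add_sum_erase Finset.univ x (Finset.mem_univ i)]
      linarith [h0]
    -- the Nash inequality in concrete form
    have hlog : ∀ t : ℝ, -x i < t → x i + t ≤ M →
        v i * Real.log ((S + t) / S) ≤ c i * t := by
      intro t ht htM
      have hy0 : (0:ℝ) ≤ x i + t := by linarith
      have hN := hNash i (x i + t) hy0
      have hStpos : 0 < S + t := by
        have := hSsub i; linarith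
      rw [util, util, hsum, hsup _ htM, if_pos hMpos, if_pos hMpos] at hN
      simp only [Function.update_self] at hN
      have harg : S - x i + (x i + t) = S + t := by ring
      rw [harg] at hN
      have hld1 : Real.log ((S + t) / M) = Real.log (S + t) - Real.log M :=
        Real.log_div (ne_of_gt hStpos) (ne_of_gt hMpos)
      have hld2 : Real.log (S / M) = Real.log S - Real.log M :=
        Real.log_div (ne_of_gt hSpos) (ne_of_gt hMpos)
      have hld3 : Real.log ((S + t) / S) = Real.log (S + t) - Real.log S :=
        Real.log_div (ne_of_gt hStpos) (ne_of_gt hSpos)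
      rw [hld1, hld2] at hN
      rw [hld3]
      nlinarith [hN]
    -- lower bound on log : log u ≥ 1 - 1/u
    have hbound : ∀ t : ℝ, -x i < t →
        v i * (t / (S + t)) ≤ v i * Real.log ((S + t) / S) := by
      intro t ht
      have hStpos : 0 < S + t := by have := hSsub i; linarith
      have hupos : 0 < (S + t) / S := div_pos hStpos hSpos
      have := Real.one_sub_inv_le_log_of_pos hupos
      have hinv : ((S + t) / S)⁻¹ = S / (S + t) := by
        rw [inv_div]
      rw [hinv] at this
      have heq : 1 - S / (S + t) = t / (S + t) := by
        field_simp
        ring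
      rw [heq] at this
      exact mul_le_mul_of_nonneg_left this (le_of_lt (hv i))
    -- upper direction: v i ≤ c i * S
    have hle : v i ≤ c i * S := by
      by_contra h
      push_neg at h
      set t : ℝ := min (M - x i) ((v i - c i * S) / (2 * c i)) with htdef
      clear_value t
      have htpos : 0 < t := by
        rw [htdef]
        apply lt_min
        · linarith
        · apply div_pos; linarith; linarith [hc i]
      have ht1 : -x i < t := by linarith
      have ht2 : x i + t ≤ M := by
        have := min_le_left (M - x i) ((v i - c i * S) / (2 * c i))
        rw [← htdef] at this; linarith
      have h1 := hlog t ht1 ht2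
      have h2 := hbound t ht1
      have hStpos : 0 < S + t := by linarith
      -- v i * t / (S+t) ≤ c i * t  ⇒  v i ≤ c i (S+t)
      have h3 : v i * (t / (S + t)) ≤ c i * t := le_trans h2 h1
      have h4 : v i ≤ c i * (S + t) := by
        rw [mul_div_assoc'] at h3
        rw [div_le_iff₀ hStpos] at h3
        have := mul_le_mul_of_nonneg_right h3 (le_of_lt (inv_pos.mpr htpos))
        calc v i = v i * t * t⁻¹ := by field_simp
          _ ≤ c i * t * (S + t) * t⁻¹ := this
          _ = c i * (S + t) := by field_simp
      have ht3 : t ≤ (v i - c i * S) / (2 * c i) := by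
        have := min_le_right (M - x i) ((v i - c i * S) / (2 * c i))
        rw [← htdef] at this; exact this
      have h5 : c i * t ≤ c i * ((v i - c i * S) / (2 * c i)) :=
        mul_le_mul_of_nonneg_left ht3 (le_of_lt (hc i))
      have h6 : c i * ((v i - c i * S) / (2 * c i)) = (v i - c i * S) / 2 := by
        rw [mul_comm (2:ℝ) (c i), ← mul_div_assoc,
          mul_div_mul_left _ _ (ne_of_gt (hc i))]
      rw [h6] at h5
      nlinarith [h4, h5, h]
    -- lower direction: c i * S ≤ v i
    have hge : c i * S ≤ v i := by
      by_contra h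
      push_neg at h
      set t : ℝ := -min (x i / 2) ((c i * S - v i) / (2 * c i)) with htdef
      clear_value t
      have hmpos : 0 < min (x i / 2) ((c i * S - v i) / (2 * c i)) := by
        apply lt_min
        · linarith
        · apply div_pos; linarith; linarith [hc i]
      have htneg : t < 0 := by rw [htdef]; linarith
      have ht1 : -x i < t := by
        have := min_le_left (x i / 2) ((c i * S - v i) / (2 * c i))
        rw [htdef]; linarith
      have ht2 : x i + t ≤ M := by
        have := hMle i; linarith
      have h1 := hlog t ht1 ht2
      have h2 := hbound t ht1
      have hStpos : 0 < S + t := by have := hSsub i; linarith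
      have h3 : v i * (t / (S + t)) ≤ c i * t := le_trans h2 h1
      -- divide by t < 0 : flips
      have h4 : c i * (S + t) ≤ v i := by
        rw [mul_div_assoc'] at h3
        rw [div_le_iff₀ hStpos] at h3
        -- v i * t ≤ c i * t * (S + t), t < 0
        nlinarith [h3]
      have ht3 : -t ≤ (c i * S - v i) / (2 * c i) := by
        have := min_le_right (x i / 2) ((c i * S - v i) / (2 * c i))
        rw [htdef]; linarith
      have h5 : c i * (-t) ≤ c i * ((c i * S - v i) / (2 * c i)) :=
        mul_le_mul_of_nonneg_left ht3 (le_of_lt (hc i))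
      have h6 : c i * ((c i * S - v i) / (2 * c i)) = (c i * S - v i) / 2 := by
        rw [mul_comm (2:ℝ) (c i), ← mul_div_assoc,
          mul_div_mul_left _ _ (ne_of_gt (hc i))]
      rw [h6] at h5
      nlinarith [h4, h5, h]
    linarith
  -- uniqueness of the intermediate player
  have uniq : ∀ i j : Fin n, (0 < x i ∧ x i < ⨆ k, x k) → (0 < x j ∧ x j < ⨆ k, x k) → i = j := by
    intro i j ⟨hi1, hi2⟩ ⟨hj1, hj2⟩
    have ki := key i hi1 hi2
    have kj := key j hj1 hj2
    apply hβ
    show v i / c i = v j / c j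
    rw [ki, kj, mul_div_cancel_left₀ _ (ne_of_gt (hc i)),
      mul_div_cancel_left₀ _ (ne_of_gt (hc j))]
  refine ⟨?_, uniq⟩
  by_cases hmid : ∃ i : Fin n, 0 < x i ∧ x i < M
  · obtain ⟨i0, hi0⟩ := hmid
    have hsub : ((Finset.univ.image x).filter (fun y => 0 < y)) ⊆ {M, x i0} := by
      intro y hy
      simp only [Finset.mem_filter, Finset.mem_image, Finset.mem_univ, true_and] at hy
      obtain ⟨⟨a, ha⟩, hypos⟩ := hy
      rcases eq_or_lt_of_le (hMle a) with heq | hlt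
      · simp only [Finset.mem_insert, Finset.mem_singleton]
        left; rw [← ha, heq]
      · have hai : a = i0 := uniq a i0 ⟨by rwa [ha], hlt⟩ hi0
        simp only [Finset.mem_insert, Finset.mem_singleton]
        right; rw [← ha, hai]
    calc ((Finset.univ.image x).filter (fun y => 0 < y)).card
        ≤ ({M, x i0} : Finset ℝ).card := Finset.card_le_card hsub
      _ ≤ 2 := by
          apply le_trans (Finset.card_insert_le _ _)
          simp
  · push_neg at hmid
    have hsub : ((Finset.univ.image x).filter (fun y => 0 < y)) ⊆ {M} := by
      intro y hy
      simp only [Finset.mem_filter, Finset.mem_image, Finset.mem_univ, true_and] at hy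
      obtain ⟨⟨a, ha⟩, hypos⟩ := hy
      have h1 := hmid a (by rwa [ha])
      have h2 := hMle a
      simp only [Finset.mem_singleton]
      rw [← ha]; linarith
    calc ((Finset.univ.image x).filter (fun y => 0 < y)).card
        ≤ ({M} : Finset ℝ).card := Finset.card_le_card hsub
      _ ≤ 2 := by simp
end

section
/- In the n-player normalised total effort game, suppose players j and k both contribute positive amounts that are strictly less than max_i x_i, and each of them is playing a best response to the other players' contributions (no unilateral change of their own contribution strictly increases their utility). Then β_j = β_k, i.e. v_j/c_j = v_k/c_k; in fact both β_j and β_k equal the total contribution Σ_i x_i. -/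
lemma key_one (n : ℕ) (v c : Fin n → ℝ)
    (hv : ∀ i, 0 < v i) (hc : ∀ i, 0 < c i)
    (x : Fin n → ℝ) (hx : ∀ i, 0 ≤ x i)
    (j : Fin n) (hxj : 0 < x j) (hjlt : x j < ⨆ i, x i)
    (hbrj : ∀ y : ℝ, 0 ≤ y → util v c j (Function.update x j y) ≤ util v c j x) :
    v j / c j = ∑ i, x i := by
  haveI : Nonempty (Fin n) := ⟨j⟩
  set M := ⨆ i, x i with hMdef
  have hM : 0 < M := hxj.trans hjlt
  have hbdd : BddAbove (Set.range x) := Set.Finite.bddAbove (Set.finite_range x)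
  have hle : ∀ i, x i ≤ M := fun i => le_ciSup hbdd i
  obtain ⟨i0, hi0⟩ : ∃ i0, x i0 = M := by
    obtain ⟨i0, hi0⟩ := Finite.exists_max x
    refine ⟨i0, le_antisymm (hle i0) (ciSup_le hi0)⟩
  have hi0j : i0 ≠ j := by rintro rfl; exact absurd hi0 (ne_of_lt hjlt)
  set T : ℝ := (∑ i, x i) - x j with hT
  have hsum : ∀ y : ℝ, ∑ i, Function.update x j y i = T + y := by
    intro y
    rw [Finset.sum_update_of_mem (Finset.mem_univ j), Finset.sdiff_singleton_eq_erase,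
      Finset.sum_erase_eq_sub (Finset.mem_univ j)]
    ring
  have hTpos : 0 < T := by
    have h1 : x i0 ≤ ∑ i ∈ Finset.univ.erase j, x i :=
      Finset.single_le_sum (fun i _ => hx i) (Finset.mem_erase.2 ⟨hi0j, Finset.mem_univ i0⟩)
    have h2 : ∑ i ∈ Finset.univ.erase j, x i = T := by
      rw [Finset.sum_erase_eq_sub (Finset.mem_univ j)]
    linarith [hM, hi0 ▸ h1, h2 ▸ h1, h2]
  have hsup : ∀ y : ℝ, y ≤ M → (⨆ i, Function.update x j y i) = M := by
    intro y hy
    apply le_antisymm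
    · apply ciSup_le
      intro i
      rcases eq_or_ne i j with rfl | h
      · simpa using hy
      · simp [Function.update_of_ne h, hle i]
    · have : Function.update x j y i0 = M := by rw [Function.update_of_ne hi0j, hi0]
      calc M = Function.update x j y i0 := this.symm
        _ ≤ ⨆ i, Function.update x j y i :=
            le_ciSup (Set.Finite.bddAbove (Set.finite_range _)) i0
  set g : ℝ → ℝ := fun y => v j * Real.log (T + y) - c j * y with hg
  have hutil : ∀ y : ℝ, 0 ≤ y → y ≤ M →
      util v c j (Function.update x j y) = g y - v j * Real.log M := by
    intro y hy0 hyM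
    have h1 := hsup y hyM
    rw [util, h1, if_pos hM, hsum y, Function.update_self,
      Real.log_div (by positivity) (ne_of_gt hM)]
    simp [hg]; ring
  have hux : util v c j x = g (x j) - v j * Real.log M := by
    have : Function.update x j (x j) = x := Function.update_eq_self j x
    rw [← this, hutil (x j) (hx j) (hle j)]
    simp
  have hloc : IsLocalMax g (x j) := by
    have hmem : Set.Ioo (0:ℝ) M ∈ nhds (x j) := Ioo_mem_nhds hxj hjlt
    filter_upwards [hmem] with y hy
    have := hbrj y hy.1.le
    rw [hutil y hy.1.le hy.2.le, hux] at this
    linarith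
  have hd : HasDerivAt g (v j * (T + x j)⁻¹ - c j) (x j) := by
    have h1 : HasDerivAt (fun y : ℝ => T + y) 1 (x j) := by
      simpa using (hasDerivAt_id (x j)).const_add T
    have h2 : HasDerivAt (fun y : ℝ => Real.log (T + y)) ((T + x j)⁻¹ * 1) (x j) :=
      (Real.hasDerivAt_log (by positivity)).comp (x j) h1
    have h3 : HasDerivAt (fun y : ℝ => c j * y) (c j) (x j) := by
      simpa using (hasDerivAt_id (x j)).const_mul (c j)
    simpa [hg, mul_comm, Pi.sub_def] using (h2.const_mul (v j)).sub h3
  have hzero := hloc.hasDerivAt_eq_zero hd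
  have hS : T + x j = ∑ i, x i := by rw [hT]; ring
  have : v j * (T + x j)⁻¹ = c j := by linarith
  rw [hS] at this
  have hSpos : (0:ℝ) < ∑ i, x i := by rw [← hS]; positivity
  rw [div_eq_iff (ne_of_gt (hc j))]
  field_simp at this
  linarith [this]

/-- If players `j ≠ k` both contribute positive amounts strictly less than `max_i x_i`,
and each is playing a best response to the other players' contributions, then
`β_j = β_k`; in fact both equal the total contribution `∑_i x_i`. -/
theorem equal_benefit_cost_ratios (n : ℕ) (v c : Fin n → ℝ)
    (hv : ∀ i, 0 < v i) (hc : ∀ i, 0 < c i)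
    (x : Fin n → ℝ) (hx : ∀ i, 0 ≤ x i)
    (j k : Fin n) (hjk : j ≠ k)
    (hxj : 0 < x j) (hxk : 0 < x k)
    (hjlt : x j < ⨆ i, x i) (hklt : x k < ⨆ i, x i)
    (hbrj : ∀ y : ℝ, 0 ≤ y → util v c j (Function.update x j y) ≤ util v c j x)
    (hbrk : ∀ y : ℝ, 0 ≤ y → util v c k (Function.update x k y) ≤ util v c k x) :
    v j / c j = ∑ i, x i ∧ v k / c k = ∑ i, x i :=
  ⟨key_one n v c hv hc x hx j hxj hjlt hbrj,
   key_one n v c hv hc x hx k hxk hklt hbrk⟩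
end

section
/- In the n-player normalised total effort game, in any Nash equilibrium with max_j x_j > 0, every player i with x_i > 0 satisfies Σ_{j=1}^n x_j ≤ β_i. -/
/-- In any Nash equilibrium of the `n`-player normalised total effort game with a
positive maximal contribution, every contributing player `i` (with `x_i > 0`)
satisfies `∑_j x_j ≤ β_i = v_i / c_i`. -/
theorem equilibrium_sum_le_ratio (n : ℕ) (v c : Fin n → ℝ)
    (hv : ∀ i, 0 < v i) (hc : ∀ i, 0 < c i)
    (x : Fin n → ℝ) (hx : ∀ i, 0 ≤ x i) (hNash : IsNash v c x)
    (hmax : 0 < ⨆ j, x j) :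
    ∀ i : Fin n, 0 < x i → ∑ j, x j ≤ v i / c i := by
  intro i hxi
  have hn : Nonempty (Fin n) := ⟨i⟩
  set M : ℝ := ⨆ j, x j with hM
  set S : ℝ := ∑ j, x j with hSdef
  have hbdd : ∀ (f : Fin n → ℝ), BddAbove (Set.range f) :=
    fun f => (Set.finite_range f).bddAbove
  have hle : ∀ j, x j ≤ M := fun j => le_ciSup (hbdd x) j
  have hxiS : x i ≤ S :=
    Finset.single_le_sum (fun j _ => hx j) (Finset.mem_univ i)
  have hS : 0 < S := lt_of_lt_of_le hxi hxiS
  obtain ⟨j0, hj0⟩ : ∃ j0, ∀ k, x k ≤ x j0 := Finite.exists_max x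
  have hMj0 : x j0 = M := le_antisymm (hle j0) (ciSup_le hj0)
  have hiM : x i ≤ M := hle i
  have hsum_upd : ∀ y : ℝ, ∑ j, Function.update x i y j = S - x i + y := by
    intro y
    rw [Finset.sum_update_of_mem (Finset.mem_univ i), Finset.sdiff_singleton_eq_erase]
    have := Finset.add_sum_erase Finset.univ x (Finset.mem_univ i)
    rw [hSdef]
    linarith [this]
  -- key claim: some player other than i attains the max
  have hexists : ∃ j, j ≠ i ∧ x j = M := by
    by_contra hcon
    push_neg at hcon
    have hxiM : x i = M := by
      by_cases hj : j0 = i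
      · rw [← hj]; exact hMj0
      · exact absurd hMj0 (hcon j0 hj)
    have hlt : ∀ j, j ≠ i → x j < x i := fun j hj =>
      lt_of_le_of_ne (hxiM ▸ hle j) (fun e => hcon j hj (e.trans hxiM))
    by_cases hSe : S = x i
    · -- all other contributions are zero; deviating to 0 gives utility 0 > current
      have h0 : ∀ j ∈ Finset.univ.erase i, x j = 0 := by
        have hsub : ∑ j ∈ Finset.univ.erase i, x j = 0 := by
          have := Finset.add_sum_erase Finset.univ x (Finset.mem_univ i)
          rw [hSdef] at hSe
          linarith [this]
        exact fun j hj =>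
          (Finset.sum_eq_zero_iff_of_nonneg (fun k _ => hx k)).mp hsub j hj
      have hupd0 : Function.update x i 0 = fun _ => (0 : ℝ) := by
        funext j
        by_cases hj : j = i
        · subst hj; simp
        · rw [Function.update_of_ne hj]
          exact h0 j (Finset.mem_erase.mpr ⟨hj, Finset.mem_univ j⟩)
      have hN := hNash i 0 le_rfl
      rw [hupd0] at hN
      have hL : util v c i (fun _ => (0 : ℝ)) = 0 := by
        simp [util, ciSup_const]
      have hR : util v c i x = -(c i * x i) := by
        simp only [util, ← hM, if_pos hmax, ← hSdef]
        rw [hSe, ← hxiM, div_self (ne_of_gt hxi), Real.log_one]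
        ring
      rw [hL, hR] at hN
      nlinarith [hc i]
    · -- S > x i; i is strict max, lowering its contribution strictly improves
      have hSgt : x i < S := lt_of_le_of_ne hxiS (fun e => hSe e.symm)
      set M' : ℝ := Finset.univ.sup' (Finset.univ_nonempty) (fun j => if j = i then 0 else x j) with hM'
      have hM'lt : M' < x i := by
        obtain ⟨j, _, hj⟩ := Finset.exists_mem_eq_sup' (Finset.univ_nonempty)
          (fun j => if j = i then 0 else x j)
        rw [hM', hj]
        by_cases h : j = i
        · simpa [h] using hxi
        · simpa [h] using hlt j h
      have hM'ge : ∀ j, j ≠ i → x j ≤ M' := by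
        intro j hj
        have h := Finset.le_sup' (fun k => if k = i then 0 else x k) (Finset.mem_univ j)
        rw [if_neg hj] at h
        exact h
      have hM'0 : (0:ℝ) ≤ M' := by
        have h := Finset.le_sup' (fun k => if k = i then 0 else x k) (Finset.mem_univ i)
        rw [if_pos rfl] at h
        exact h
      set y : ℝ := (M' + x i) / 2 with hy
      have hy0 : 0 < y := by rw [hy]; linarith
      have hylt : y < x i := by rw [hy]; linarith
      have hygt : M' < y := by rw [hy]; linarith
      have hsupy : (⨆ j, Function.update x i y j) = y := by
        apply le_antisymm
        · apply ciSup_le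
          intro j
          by_cases hj : j = i
          · subst hj; simp
          · rw [Function.update_of_ne hj]
            exact le_of_lt (lt_of_le_of_lt (hM'ge j hj) hygt)
        · have := le_ciSup (hbdd (Function.update x i y)) i
          simpa using this
      have hN := hNash i y (le_of_lt hy0)
      simp only [util, hsupy, if_pos hy0, ← hM, if_pos hmax, ← hSdef,
        Function.update_self] at hN
      rw [hsum_upd y] at hN
      rw [← hxiM] at hN
      -- hN : v i * log ((S - x i + y)/y) - c i * y ≤ v i * log (S / x i) - c i * x i
      have hlog : Real.log (S / x i) < Real.log ((S - x i + y) / y) := by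
        apply Real.log_lt_log (div_pos hS hxi)
        rw [div_lt_div_iff₀ hxi hy0]
        nlinarith
      have h1 := mul_lt_mul_of_pos_left hlog (hv i)
      have h2 := mul_lt_mul_of_pos_left hylt (hc i)
      linarith
  -- main argument
  obtain ⟨j1, hj1, hj1M⟩ := hexists
  by_contra hcon
  push_neg at hcon
  have hvc : v i < c i * S := by
    have := (div_lt_iff₀ (hc i)).mp hcon
    linarith
  set ε : ℝ := min (x i) (S - v i / c i) / 2 with hε
  have hratio : 0 < S - v i / c i := by linarith
  have hε0 : 0 < ε := by
    rw [hε]; positivity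
  have hεxi : ε < x i := by
    rw [hε]
    have := min_le_left (x i) (S - v i / c i)
    linarith
  have hεr : ε < S - v i / c i := by
    rw [hε]
    have := min_le_right (x i) (S - v i / c i)
    linarith
  have hSε : 0 < S - ε := by linarith
  have hvcε : v i < c i * (S - ε) := by
    have h1 : v i / c i < S - ε := by linarith
    have := (div_lt_iff₀ (hc i)).mp h1
    linarith
  set y : ℝ := x i - ε with hy
  have hy0 : 0 ≤ y := by rw [hy]; linarith
  have hsupy : (⨆ j, Function.update x i y j) = M := by
    apply le_antisymm
    · apply ciSup_le
      intro j
      by_cases hj : j = i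
      · subst hj; simp only [Function.update_self]; linarith
      · rw [Function.update_of_ne hj]; exact hle j
    · have := le_ciSup (hbdd (Function.update x i y)) j1
      rw [Function.update_of_ne hj1, hj1M] at this
      exact this
  have hN := hNash i y hy0
  simp only [util, hsupy, if_pos hmax, ← hM, ← hSdef, Function.update_self] at hN
  rw [hsum_upd y] at hN
  have hsum' : S - x i + y = S - ε := by rw [hy]; ring
  rw [hsum'] at hN
  -- hN : v i * log ((S - ε)/M) - c i * (x i - ε) ≤ v i * log (S/M) - c i * x i
  have hld1 : Real.log ((S - ε) / M) = Real.log (S - ε) - Real.log M :=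
    Real.log_div (ne_of_gt hSε) (ne_of_gt hmax)
  have hld2 : Real.log (S / M) = Real.log S - Real.log M :=
    Real.log_div (ne_of_gt hS) (ne_of_gt hmax)
  rw [hld1, hld2, hy] at hN
  -- now: c i * ε ≤ v i * (log S - log (S - ε))
  have hbound : Real.log S - Real.log (S - ε) ≤ ε / (S - ε) := by
    have h1 : Real.log (S / (S - ε)) ≤ S / (S - ε) - 1 :=
      Real.log_le_sub_one_of_pos (div_pos hS hSε)
    rw [Real.log_div (ne_of_gt hS) (ne_of_gt hSε)] at h1
    have h2 : S / (S - ε) - 1 = ε / (S - ε) := by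
      field_simp
      ring
    linarith [h1, h2 ▸ h1]
  have hkey : c i * ε ≤ v i * (ε / (S - ε)) := by
    have hmono : v i * (Real.log S - Real.log (S - ε)) ≤ v i * (ε / (S - ε)) :=
      mul_le_mul_of_nonneg_left hbound (le_of_lt (hv i))
    linarith
  have hfin : c i * (S - ε) ≤ v i := by
    have h3 : c i * ε * (S - ε) ≤ v i * (ε / (S - ε)) * (S - ε) :=
      mul_le_mul_of_nonneg_right hkey (le_of_lt hSε)
    have h4 : v i * (ε / (S - ε)) * (S - ε) = v i * ε := by
      field_simp
    rw [h4] at h3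
    nlinarith [hε0]
  linarith
end

section
/- Consider the n-player normalised total effort game (n ≥ 2) with β_1 < … < β_n in a 1-value equilibrium where all n players contribute x_eq > 0 with n·x_eq ≤ β_1. A new player with benefit-cost ratio β > 0 joins and contributes its best-response value x_new = max{0, min(x_eq, β − n·x_eq)}. Then there exists an original player j whose best-response value b_j = max{0, min(max of the other n contributions, β_j − (sum of the other n contributions))}, computed in the resulting (n+1)-player profile, differs from x_eq if and only if β > β_1 and β_1/(n+1) < x_eq < β/n. -/
/-- Maximum of the contributions of the players other than `j`. -/
noncomputable def othersMax {m : ℕ} (y : Fin m → ℝ) (j : Fin m) : ℝ :=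
  ⨆ i : {i : Fin m // i ≠ j}, y i.val

/-- Sum of the contributions of the players other than `j`. -/
noncomputable def othersSum {m : ℕ} (y : Fin m → ℝ) (j : Fin m) : ℝ :=
  ∑ i ∈ Finset.univ.erase j, y i

/-- Best-response value of a player with benefit-cost ratio `β` against the profile `y`:
`max(0, min(M, β − S))` where `M` and `S` are the maximum and the sum of the other
players' contributions. -/
noncomputable def bestResp {m : ℕ} (β : ℝ) (y : Fin m → ℝ) (j : Fin m) : ℝ :=
  max 0 (min (othersMax y j) (β - othersSum y j))

lemma othersMax_snoc {n : ℕ} (hn : 2 ≤ n) (x t : ℝ) (ht : t ≤ x) (j : Fin n) :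
    othersMax (Fin.snoc (fun _ : Fin n => x) t : Fin (n + 1) → ℝ) (Fin.castSucc j) = x := by
  set y : Fin (n + 1) → ℝ := Fin.snoc (fun _ : Fin n => x) t with hy
  have hxv : ∀ i : Fin n, y (Fin.castSucc i) = x := fun i => by simp [hy]
  have hlast : y (Fin.last n) = t := by simp [hy]
  set k : Fin n := if j = ⟨0, by omega⟩ then ⟨1, by omega⟩ else ⟨0, by omega⟩ with hk
  have hkj : k ≠ j := by
    by_cases h : j = ⟨0, by omega⟩
    · rw [hk, if_pos h, h]
      simp [Fin.ext_iff]
    · simp only [hk, if_neg h]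
      exact fun hh => h hh.symm
  have hkj' : (Fin.castSucc k : Fin (n + 1)) ≠ Fin.castSucc j := by
    simpa [Fin.castSucc_inj] using hkj
  haveI : Nonempty {i : Fin (n + 1) // i ≠ Fin.castSucc j} := ⟨⟨Fin.castSucc k, hkj'⟩⟩
  apply le_antisymm
  · apply ciSup_le
    rintro ⟨i, hi⟩
    induction i using Fin.lastCases with
    | last => simpa [hlast] using ht
    | cast i => simp [hxv]
  · have := le_ciSup (f := fun i : {i : Fin (n + 1) // i ≠ Fin.castSucc j} => y i.val)
      (Set.Finite.bddAbove (Set.finite_range _)) ⟨Fin.castSucc k, hkj'⟩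
    simpa [hxv, othersMax] using this

lemma othersSum_snoc {n : ℕ} (x t : ℝ) (j : Fin n) :
    othersSum (Fin.snoc (fun _ : Fin n => x) t : Fin (n + 1) → ℝ) (Fin.castSucc j)
      = (n : ℝ) * x + t - x := by
  set y : Fin (n + 1) → ℝ := Fin.snoc (fun _ : Fin n => x) t with hy
  have htot : ∑ i, y i = (n : ℝ) * x + t := by
    rw [Fin.sum_univ_castSucc]
    simp [hy, mul_comm]
  have : othersSum y (Fin.castSucc j) = (∑ i, y i) - y (Fin.castSucc j) := by
    rw [othersSum, Finset.sum_erase_eq_sub (Finset.mem_univ _)]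
  rw [this, htot]
  simp [hy]

/-- New player joining a 1-value equilibrium: in the `n`-player NTEG (`n ≥ 2`) with
`β₁ < … < β_n` where all `n` players contribute `x_eq > 0` with `n·x_eq ≤ β₁`, a new
player with benefit-cost ratio `β > 0` joins and contributes its best-response value
`x_new = max(0, min(x_eq, β − n·x_eq))`. Then some original player's best-response
value in the resulting `(n+1)`-player profile differs from `x_eq` iff `β > β₁` and
`β₁/(n+1) < x_eq < β/n`. -/
theorem new_player_one_value (n : ℕ) (hn : 2 ≤ n) (v c : Fin n → ℝ)
    (hv : ∀ i, 0 < v i) (hc : ∀ i, 0 < c i)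
    (hβ : StrictMono (fun i : Fin n => v i / c i))
    (xeq : ℝ) (hxeq : 0 < xeq)
    (heq : (n : ℝ) * xeq ≤ v ⟨0, by omega⟩ / c ⟨0, by omega⟩)
    (β : ℝ) (hβpos : 0 < β) :
    (∃ j : Fin n,
        bestResp (v j / c j)
          (Fin.snoc (fun _ : Fin n => xeq)
            (max 0 (min xeq (β - (n : ℝ) * xeq))) : Fin (n + 1) → ℝ)
          (Fin.castSucc j) ≠ xeq) ↔
      (v ⟨0, by omega⟩ / c ⟨0, by omega⟩ < β ∧
        (v ⟨0, by omega⟩ / c ⟨0, by omega⟩) / ((n : ℝ) + 1) < xeq ∧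
        xeq < β / (n : ℝ)) := by
  set β₁ := v ⟨0, by omega⟩ / c ⟨0, by omega⟩ with hβ₁
  set t := max 0 (min xeq (β - (n : ℝ) * xeq)) with htdef
  have ht : t ≤ xeq := max_le hxeq.le (min_le_left _ _)
  have ht0 : 0 ≤ t := le_max_left _ _
  have hnpos : (0 : ℝ) < n := by positivity
  -- compute bestResp
  have hbr : ∀ j : Fin n,
      bestResp (v j / c j)
        (Fin.snoc (fun _ : Fin n => xeq) t : Fin (n + 1) → ℝ) (Fin.castSucc j)
      = max 0 (min xeq (v j / c j - ((n : ℝ) * xeq + t - xeq))) := by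
    intro j
    rw [bestResp, othersMax_snoc hn _ _ ht, othersSum_snoc]
  have hne : ∀ j : Fin n,
      (bestResp (v j / c j)
        (Fin.snoc (fun _ : Fin n => xeq) t : Fin (n + 1) → ℝ) (Fin.castSucc j) ≠ xeq)
      ↔ v j / c j < (n : ℝ) * xeq + t := by
    intro j
    rw [hbr j]
    constructor
    · intro h
      by_contra hge
      push_neg at hge
      apply h
      have hle2 : xeq ≤ v j / c j - ((n : ℝ) * xeq + t - xeq) := by linarith
      rw [min_eq_left hle2, max_eq_right hxeq.le]
    · intro h
      have h1 : v j / c j - ((n : ℝ) * xeq + t - xeq) < xeq := by linarith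
      have : max 0 (min xeq (v j / c j - ((n : ℝ) * xeq + t - xeq))) < xeq := by
        rcases le_or_gt (min xeq (v j / c j - ((n : ℝ) * xeq + t - xeq))) 0 with hm | hm
        · rw [max_eq_left hm]; exact hxeq
        · rw [max_eq_right hm.le]; exact lt_of_le_of_lt (min_le_right _ _) h1
      exact ne_of_lt this
  have hβ₁le : ∀ j : Fin n, β₁ ≤ v j / c j := fun j =>
    hβ.monotone (show (⟨0, by omega⟩ : Fin n) ≤ j by simp [Fin.le_def])
  constructor
  · rintro ⟨j, hj⟩
    rw [hne j] at hj
    have h0 : β₁ < (n : ℝ) * xeq + t := lt_of_le_of_lt (hβ₁le j) hj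
    -- t > 0 needed, so β > n*xeq
    have hβgt : (n : ℝ) * xeq < β := by
      by_contra hle
      push_neg at hle
      have : t = 0 := by
        rw [htdef, max_eq_left]
        exact le_trans (min_le_right _ _) (by linarith)
      rw [this] at h0
      linarith
    have htval : t = min xeq (β - (n : ℝ) * xeq) := by
      rw [htdef, max_eq_right]
      exact le_min hxeq.le (by linarith)
    refine ⟨?_, ?_, ?_⟩
    · have : t ≤ β - (n : ℝ) * xeq := htval ▸ min_le_right _ _
      linarith
    · have : t ≤ xeq := ht
      rw [div_lt_iff₀ (by positivity)]
      linarith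
    · rw [lt_div_iff₀ hnpos]
      linarith
  · rintro ⟨h1, h2, h3⟩
    refine ⟨⟨0, by omega⟩, ?_⟩
    rw [hne]
    have hβgt : (n : ℝ) * xeq < β := by
      rw [lt_div_iff₀ hnpos] at h3
      linarith
    have htval : t = min xeq (β - (n : ℝ) * xeq) := by
      rw [htdef, max_eq_right]
      exact le_min hxeq.le (by linarith)
    have hx1 : β₁ < ((n : ℝ) + 1) * xeq := by
      rw [div_lt_iff₀ (by positivity)] at h2
      linarith
    rcases min_cases xeq (β - (n : ℝ) * xeq) with ⟨hm, _⟩ | ⟨hm, _⟩ <;>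
      rw [htval, hm] <;> linarith
end

section
/- Consider the n-player normalised total effort game (n ≥ 3) with β_1 < … < β_n in a 2-value equilibrium where player 1 contributes x_1 = β_1 − (n−1)·x_eq and players 2,…,n each contribute x_eq, with β_1/n < x_eq < β_1/(n−1). A new player with benefit-cost ratio β > 0 joins and contributes its best-response value x_new = max{0, min(x_eq, β − β_1)}. Then: (i) if β ≤ β_1, x_new = 0 and every original player's best-response value in the resulting (n+1)-player profile is unchanged (it equals their current contribution); (ii) if β > β_1, then x_new > 0 and player 1's best-response value in the resulting (n+1)-player profile differs from x_1. -/
private lemma auxSum (n : ℕ) (hn : 0 < n) (x₁ xeq : ℝ) :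
    ∑ i : Fin n, (if (i : ℕ) = 0 then x₁ else xeq) = x₁ + ((n:ℝ)-1)*xeq := by
  have h : ∀ i : Fin n, (if (i : ℕ) = 0 then x₁ else xeq)
      = xeq + (if i = (⟨0, hn⟩ : Fin n) then x₁ - xeq else 0) := by
    intro i
    by_cases hi : (i : ℕ) = 0
    · rw [if_pos hi, if_pos (Fin.ext hi)]; ring
    · rw [if_neg hi, if_neg (by intro h; exact hi (by rw [h])), add_zero]
  rw [Finset.sum_congr rfl (fun i _ => h i), Finset.sum_add_distrib, Finset.sum_const,
    Finset.sum_ite_eq' Finset.univ _ (fun _ => x₁ - xeq)]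
  simp [Finset.card_univ]
  ring


private lemma auxMax {m : ℕ} (y : Fin m → ℝ) (j : Fin m) (a : ℝ)
    (hle : ∀ i, y i ≤ a) (k : Fin m) (hk : k ≠ j) (hka : y k = a) :
    othersMax y j = a := by
  have : Nonempty {i : Fin m // i ≠ j} := ⟨⟨k, hk⟩⟩
  refine le_antisymm (ciSup_le fun i => hle i.val) ?_
  have := le_ciSup (f := fun i : {i : Fin m // i ≠ j} => y i.val)
    (Set.Finite.bddAbove (Set.finite_range _)) ⟨k, hk⟩
  simpa [hka, othersMax] using this

private lemma auxOthersSum {m : ℕ} (y : Fin m → ℝ) (j : Fin m) :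
    othersSum y j = (∑ i, y i) - y j :=
  Finset.sum_erase_eq_sub (Finset.mem_univ j)

/-- New player joining a 2-value equilibrium: in the `n`-player NTEG (`n ≥ 3`) with
`β₁ < … < β_n`, player 1 contributes `x₁ = β₁ − (n−1)·x_eq` and players `2, …, n`
contribute `x_eq`, with `β₁/n < x_eq < β₁/(n−1)`. A new player with benefit-cost ratio
`β > 0` joins and contributes its best-response value `x_new = max(0, min(x_eq, β − β₁))`.
Then (i) if `β ≤ β₁`, `x_new = 0` and every original player's best-response value in the
resulting `(n+1)`-player profile equals their current contribution; (ii) if `β > β₁`,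
`x_new > 0` and player 1's best-response value differs from `x₁`. -/
theorem new_player_two_value (n : ℕ) (hn : 3 ≤ n) (v c : Fin n → ℝ)
    (hv : ∀ i, 0 < v i) (hc : ∀ i, 0 < c i)
    (hβ : StrictMono (fun i : Fin n => v i / c i))
    (xeq : ℝ)
    (h1 : (v ⟨0, by omega⟩ / c ⟨0, by omega⟩) / (n : ℝ) < xeq)
    (h2 : xeq < (v ⟨0, by omega⟩ / c ⟨0, by omega⟩) / ((n : ℝ) - 1))
    (β : ℝ) (hβpos : 0 < β) :
    ∀ x₁ xnew : ℝ,
      x₁ = v ⟨0, by omega⟩ / c ⟨0, by omega⟩ - ((n : ℝ) - 1) * xeq →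
      xnew = max 0 (min xeq (β - v ⟨0, by omega⟩ / c ⟨0, by omega⟩)) →
      ((β ≤ v ⟨0, by omega⟩ / c ⟨0, by omega⟩ →
          xnew = 0 ∧
          ∀ j : Fin n,
            bestResp (v j / c j)
              (Fin.snoc (fun i : Fin n => if (i : ℕ) = 0 then x₁ else xeq) xnew :
                Fin (n + 1) → ℝ)
              (Fin.castSucc j) = (if (j : ℕ) = 0 then x₁ else xeq)) ∧
        (v ⟨0, by omega⟩ / c ⟨0, by omega⟩ < β →
          0 < xnew ∧
          bestResp (v ⟨0, by omega⟩ / c ⟨0, by omega⟩)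
              (Fin.snoc (fun i : Fin n => if (i : ℕ) = 0 then x₁ else xeq) xnew :
                Fin (n + 1) → ℝ)
              (Fin.castSucc ⟨0, by omega⟩) ≠ x₁)) := by
  intro x₁ xnew hx₁ hxnew
  have hz : (0:ℕ) < n := by omega
  have hx₁' : x₁ = v ⟨0, hz⟩ / c ⟨0, hz⟩ - ((n : ℝ) - 1) * xeq := hx₁
  have hxnew' : xnew = max 0 (min xeq (β - v ⟨0, hz⟩ / c ⟨0, hz⟩)) := hxnew
  have h1' : (v ⟨0, hz⟩ / c ⟨0, hz⟩) / (n : ℝ) < xeq := h1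
  have h2' : xeq < (v ⟨0, hz⟩ / c ⟨0, hz⟩) / ((n : ℝ) - 1) := h2
  have hnR : (3:ℝ) ≤ (n:ℝ) := by exact_mod_cast hn
  have hβ₁pos : 0 < v ⟨0, hz⟩ / c ⟨0, hz⟩ := div_pos (hv _) (hc _)
  have hxeqpos : 0 < xeq := lt_trans (div_pos hβ₁pos (by linarith)) h1'
  have hmul1 : xeq * ((n:ℝ) - 1) < v ⟨0, hz⟩ / c ⟨0, hz⟩ :=
    (lt_div_iff₀ (by linarith : (0:ℝ) < (n:ℝ) - 1)).mp h2'
  have hmul2 : v ⟨0, hz⟩ / c ⟨0, hz⟩ < xeq * (n:ℝ) :=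
    (div_lt_iff₀ (by linarith : (0:ℝ) < (n:ℝ))).mp h1'
  have hx₁pos : 0 < x₁ := by nlinarith
  have hx₁lt : x₁ < xeq := by nlinarith
  have hxnle : xnew ≤ xeq := by
    rw [hxnew']; exact max_le hxeqpos.le (min_le_left _ _)
  set f : Fin n → ℝ := fun i : Fin n => if (i : ℕ) = 0 then x₁ else xeq with hf
  set y : Fin (n+1) → ℝ := Fin.snoc f xnew with hy
  have hyc : ∀ i : Fin n, y (Fin.castSucc i) = f i := fun i => by simp [hy]
  have hyl : y (Fin.last n) = xnew := by simp [hy]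
  have hyle : ∀ i : Fin (n+1), y i ≤ xeq := by
    intro i
    refine Fin.lastCases ?_ ?_ i
    · rw [hyl]; exact hxnle
    · intro k; rw [hyc k, hf]
      by_cases hk : (k : ℕ) = 0
      · simp only [if_pos hk]; exact hx₁lt.le
      · simp only [if_neg hk]; exact le_refl xeq
  have hsumy : ∑ i, y i = x₁ + ((n:ℝ)-1)*xeq + xnew := by
    rw [Fin.sum_univ_castSucc]
    simp only [hyc, hyl]
    rw [hf, auxSum n hz x₁ xeq]
  have hmax : ∀ j : Fin n, othersMax y (Fin.castSucc j) = xeq := by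
    intro j
    by_cases hj1 : (j : ℕ) = 1
    · refine auxMax y _ xeq hyle (Fin.castSucc ⟨2, by omega⟩) ?_ ?_
      · intro he
        have := congrArg Fin.val (Fin.castSucc_inj.mp he)
        simp [hj1] at this
      · rw [hyc, hf]; norm_num
    · refine auxMax y _ xeq hyle (Fin.castSucc ⟨1, by omega⟩) ?_ ?_
      · intro he
        have := congrArg Fin.val (Fin.castSucc_inj.mp he)
        simp at this
        exact hj1 this.symm
      · rw [hyc, hf]; norm_num
  have hS : ∀ j : Fin n,
      othersSum y (Fin.castSucc j) = x₁ + ((n:ℝ)-1)*xeq + xnew - f j := by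
    intro j
    rw [auxOthersSum, hsumy, hyc]
  constructor
  · intro hle
    have hle' : β ≤ v ⟨0, hz⟩ / c ⟨0, hz⟩ := hle
    have hxnew0 : xnew = 0 := by
      rw [hxnew']
      exact max_eq_left (le_trans (min_le_right _ _) (by linarith))
    refine ⟨hxnew0, fun j => ?_⟩
    show bestResp (v j / c j) y (Fin.castSucc j) = f j
    unfold bestResp
    rw [hmax j, hS j, hxnew0, hf]
    by_cases hj : (j : ℕ) = 0
    · simp only [if_pos hj]
      have hj' : j = ⟨0, hz⟩ := Fin.ext hj
      rw [hj']
      rw [show v ⟨0, hz⟩ / c ⟨0, hz⟩ - (x₁ + ((n:ℝ)-1)*xeq + 0 - x₁) = x₁ by linarith]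
      rw [min_eq_right hx₁lt.le, max_eq_right hx₁pos.le]
    · simp only [if_neg hj]
      have hlt : v ⟨0, hz⟩ / c ⟨0, hz⟩ < v j / c j := by
        have : (⟨0, hz⟩ : Fin n) < j := by
          rw [Fin.lt_def]; simp; omega
        exact hβ this
      have hge : xeq ≤ v j / c j - (x₁ + ((n:ℝ)-1)*xeq + 0 - xeq) := by linarith
      rw [min_eq_left hge, max_eq_right hxeqpos.le]
  · intro hgt
    have hgt' : v ⟨0, hz⟩ / c ⟨0, hz⟩ < β := hgt
    have hxpos : 0 < xnew := by
      rw [hxnew']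
      exact lt_max_of_lt_right (lt_min hxeqpos (by linarith))
    refine ⟨hxpos, ?_⟩
    show bestResp (v ⟨0, hz⟩ / c ⟨0, hz⟩) y (Fin.castSucc ⟨0, hz⟩) ≠ x₁
    unfold bestResp
    rw [hmax ⟨0, hz⟩, hS ⟨0, hz⟩]
    have hfz : f ⟨0, hz⟩ = x₁ := by simp [hf]
    rw [hfz]
    apply ne_of_lt
    apply max_lt hx₁pos
    exact lt_of_le_of_lt (min_le_right _ _) (by linarith)
end

section
/- Consider the n-player normalised total effort game (n ≥ 3) with β_1 < … < β_n in a 1-value equilibrium where all n players contribute x_eq > 0 with n·x_eq ≤ β_1. If any one player is removed from the game, the profile in which the remaining n−1 players each contribute x_eq is still a Nash equilibrium of the (n−1)-player game. -/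
/-- Player removal from a 1-value equilibrium: in the `(m+1)`-player NTEG (`m+1 ≥ 3`)
with `β₁ < … < β_{m+1}` where all players contribute `x_eq > 0` with
`(m+1)·x_eq ≤ β₁`, removing any player `k` leaves a profile (the remaining `m` players
each contributing `x_eq`) that is still a Nash equilibrium of the `m`-player game. -/
theorem player_removal_one_value (m : ℕ) (hm : 2 ≤ m) (v c : Fin (m + 1) → ℝ)
    (hv : ∀ i, 0 < v i) (hc : ∀ i, 0 < c i)
    (hβ : StrictMono (fun i : Fin (m + 1) => v i / c i))
    (xeq : ℝ) (hxeq : 0 < xeq)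
    (heq : ((m : ℝ) + 1) * xeq ≤ v 0 / c 0)
    (k : Fin (m + 1)) :
    IsNash (v ∘ k.succAbove) (c ∘ k.succAbove) (fun _ => xeq) := by
  intro i y hy
  have hm0 : 0 < m := by omega
  have : NeZero m := ⟨by omega⟩
  have hne : Nonempty (Fin m) := ⟨⟨0, hm0⟩⟩
  have hnt : Nontrivial (Fin m) := Fin.nontrivial_iff_two_le.mpr hm
  set V := (v ∘ k.succAbove) i with hV
  set C := (c ∘ k.succAbove) i with hC
  have hVpos : 0 < V := hv _
  have hCpos : 0 < C := hc _
  have hβi : ((m : ℝ) + 1) * xeq ≤ V / C := by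
    refine heq.trans ?_
    exact hβ.monotone (Fin.zero_le _)
  have hVC : C * (((m : ℝ) + 1) * xeq) ≤ V := (le_div_iff₀' hCpos).mp hβi
  set f : Fin m → ℝ := fun _ => xeq with hf
  set z := Function.update f i y with hz
  have hzi : z i = y := Function.update_self i y f
  -- sup of f
  have hsupf : (⨆ j, f j) = xeq := ciSup_const
  have hsumf : (∑ j, f j) = (m : ℝ) * xeq := by
    simp [hf, Finset.sum_const, Finset.card_univ, mul_comm]
  -- sum of z
  have hsumz : (∑ j, z j) = ((m : ℝ) - 1) * xeq + y := by
    rw [hz, Finset.sum_update_of_mem (Finset.mem_univ i)]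
    have hcard : (Finset.univ \ {i}).card = m - 1 := by
      rw [Finset.sdiff_singleton_eq_erase, Finset.card_erase_of_mem (Finset.mem_univ i)]
      simp
    rw [Finset.sum_const, hcard]
    have : ((m - 1 : ℕ) : ℝ) = (m : ℝ) - 1 := by
      rw [Nat.cast_sub (by omega)]; simp
    rw [nsmul_eq_mul, this]; ring
  -- sup of z
  obtain ⟨j0, hj0⟩ := exists_ne i
  have hbdd : BddAbove (Set.range z) := (Set.finite_range z).bddAbove
  have hsupz : (⨆ j, z j) = max y xeq := by
    apply le_antisymm
    · apply ciSup_le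
      intro j
      rcases eq_or_ne j i with h | h
      · subst h; rw [hzi]; exact le_max_left _ _
      · rw [hz, Function.update_of_ne h]; exact le_max_right _ _
    · apply max_le
      · calc y = z i := hzi.symm
          _ ≤ _ := le_ciSup hbdd i
      · calc xeq = z j0 := (Function.update_of_ne hj0 y f).symm
          _ ≤ _ := le_ciSup hbdd j0
  have hfi : f i = xeq := rfl
  have hxne : xeq ≠ 0 := ne_of_gt hxeq
  have hmcast : (0:ℝ) < (m:ℝ) := by exact_mod_cast hm0
  have hm2 : (2:ℝ) ≤ (m:ℝ) := by exact_mod_cast hm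
  -- unfold utilities
  show util (v ∘ k.succAbove) (c ∘ k.succAbove) i z ≤
    util (v ∘ k.succAbove) (c ∘ k.succAbove) i f
  rw [util, util, hsupf, hsumf, hsupz, hsumz, hzi, hfi,
    if_pos hxeq, if_pos (lt_max_of_lt_right hxeq)]
  rw [mul_div_assoc, div_self hxne, mul_one]
  rcases le_total y xeq with h1 | h1
  · -- y ≤ xeq : maximum is xeq
    rw [max_eq_right h1]
    set A := ((m:ℝ) - 1) * xeq + y with hA
    have hApos : 0 < A := by nlinarith [hm2, hxeq, hy]
    have hmx : (0:ℝ) < (m:ℝ) * xeq := by positivity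
    have hlog1 : Real.log (A / ((m:ℝ) * xeq)) ≤ A / ((m:ℝ) * xeq) - 1 :=
      Real.log_le_sub_one_of_pos (by positivity)
    have e2 : Real.log (A / ((m:ℝ) * xeq)) = Real.log (A / xeq) - Real.log (m:ℝ) := by
      rw [show A / ((m:ℝ) * xeq) = (A / xeq) / (m:ℝ) by rw [div_div, mul_comm]]
      exact Real.log_div (by positivity) (ne_of_gt hmcast)
    have e3 : A / ((m:ℝ) * xeq) - 1 = (y - xeq) / ((m:ℝ) * xeq) := by
      field_simp; ring
    have hL : Real.log (A / xeq) ≤ Real.log (m:ℝ) + (y - xeq) / ((m:ℝ) * xeq) := by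
      have := hlog1; rw [e2, e3] at this; linarith
    have h5 : V * ((y - xeq) / ((m:ℝ) * xeq)) ≤ C * (y - xeq) := by
      rw [mul_div_assoc', div_le_iff₀ hmx]
      have hVm : C * ((m:ℝ) * xeq) ≤ V := by nlinarith [hVC, hCpos, hxeq]
      nlinarith [mul_nonneg (sub_nonneg.mpr hVm) (sub_nonneg.mpr h1)]
    have h6 : V * Real.log (A / xeq) ≤
        V * (Real.log (m:ℝ) + (y - xeq) / ((m:ℝ) * xeq)) :=
      mul_le_mul_of_nonneg_left hL (le_of_lt hVpos)
    rw [mul_add] at h6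
    linarith [h6, h5]
  · -- xeq ≤ y : maximum is y
    rw [max_eq_left h1]
    have hypos : 0 < y := lt_of_lt_of_le hxeq h1
    set A := ((m:ℝ) - 1) * xeq + y with hA
    have hApos : 0 < A := by
      have h9 : 0 ≤ ((m:ℝ) - 1) * xeq := mul_nonneg (by linarith) hxeq.le
      show (0:ℝ) < ((m:ℝ) - 1) * xeq + y
      linarith
    have h8 : ((m:ℝ) - 1) * xeq ≤ ((m:ℝ) - 1) * y :=
      mul_le_mul_of_nonneg_left h1 (by linarith)
    have hAmy : A ≤ (m:ℝ) * y := by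
      calc A = ((m:ℝ) - 1) * xeq + y := hA
        _ ≤ ((m:ℝ) - 1) * y + y := by linarith
        _ = (m:ℝ) * y := by ring
    have hdiv : A / y ≤ (m:ℝ) := (div_le_iff₀ hypos).mpr hAmy
    have hlog : Real.log (A / y) ≤ Real.log (m:ℝ) :=
      Real.log_le_log (by positivity) hdiv
    have h6 : V * Real.log (A / y) ≤ V * Real.log (m:ℝ) :=
      mul_le_mul_of_nonneg_left hlog (le_of_lt hVpos)
    have h7 : C * xeq ≤ C * y := mul_le_mul_of_nonneg_left h1 (le_of_lt hCpos)
    linarith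
end
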